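/- Topological ultraproducts of pseudofinite Hausdorff spaces are pseudofinite Hausdorff: if D is an ultrafilter on I and D-almost every X_i is a Hausdorff space with no infinite compact subsets, then ∏_D X_i is Hausdorff with no infinite compact subsets. -/

import Mathlib

open Filter Topology Set

universe u v

def USetoid {I : Type u} (D : Ultrafilter I) (X : I → Type v) : Setoid (∀ i, X i) where
  r x y := ∀ᶠ i in (D : Filter I), x i = y i
  iseqv := ⟨fun _ => Filter.Eventually.of_forall fun _ => rfl,
    fun h => h.mono fun _ e => e.symm,
    fun h₁ h₂ => (h₁.and h₂).mono fun _ e => e.1.trans e.2⟩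

def Uprod {I : Type u} (D : Ultrafilter I) (X : I → Type v) := Quotient (USetoid D X)

def ultrabox {I : Type u} (D : Ultrafilter I) (X : I → Type v) (U : ∀ i, Set (X i)) :
    Set (Uprod D X) :=
  {q | ∃ x : ∀ i, X i, Quotient.mk (USetoid D X) x = q ∧ {i | x i ∈ U i} ∈ D}

def uTop {I : Type u} (D : Ultrafilter I) (X : I → Type v) [∀ i, TopologicalSpace (X i)] :
    TopologicalSpace (Uprod D X) :=
  TopologicalSpace.generateFrom
    {s | ∃ U : ∀ i, Set (X i), (∀ i, IsOpen (U i)) ∧ s = ultrabox D X U}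

/-!
Hausdorffness is checked coordinatewise. For pseudofiniteness split on whether `D` is countably
complete.

If it is not, there is `ρ : I → ℕ` tending to infinity along `D`; intersecting at coordinate `i`
only the first `ρ i` of countably many basic neighbourhoods shows that countable intersections of
neighbourhoods are neighbourhoods. In a T₁ space with this property countable sets are closed and
discrete, so compact sets are finite.

If it is, every `ℕ`-valued function on `I` is `D`-almost constant. Hence for an injective sequence
`[a n]` in a compact `K`, the closed ultrabox of the sets `closure {a n i | n}` lies in
`closure {[a n] | n} ⊆ K`, so it is compact. An ultrabox is compact only if `D`-almost all of its
factors are, so `D`-almost every `closure {a n i | n}` is compact, hence finite, although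
`n ↦ a n i` is injective for `D`-almost every `i`.
-/

theorem CountableInterFilter.of_iInter_nat_mem {α : Type*} {l : Filter α}
    (h : ∀ s : ℕ → Set α, (∀ n, s n ∈ l) → ⋂ n, s n ∈ l) : CountableInterFilter l where
  countable_sInter_mem S hS hSl := by
    rcases S.eq_empty_or_nonempty with rfl | hne
    · simp
    obtain ⟨s, rfl⟩ := hS.exists_eq_range hne
    rw [sInter_range]
    exact h s fun n => hSl _ (mem_range_self n)

theorem Ultrafilter.exists_eventually_of_eventually_exists {I ι : Type*} [Countable ι]
    {D : Ultrafilter I} [CountableInterFilter (D : Filter I)] {p : ι → I → Prop}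
    (h : ∀ᶠ i in D, ∃ n, p n i) : ∃ n, ∀ᶠ i in D, p n i := by
  by_contra! hne
  have hnone : ∀ᶠ i in D, ∀ n, ¬p n i := eventually_countable_forall.2 hne
  obtain ⟨i, ⟨n, hn⟩, hnone⟩ := (h.and hnone).exists
  exact hnone n hn

theorem Ultrafilter.exists_tendsto_atTop_of_not_countableInterFilter {I : Type*}
    {D : Ultrafilter I} (hD : ¬CountableInterFilter (D : Filter I)) :
    ∃ ρ : I → ℕ, Tendsto ρ D atTop := by
  classical
  obtain ⟨s, hs, hsD⟩ : ∃ s : ℕ → Set I, (∀ n, s n ∈ D) ∧ ⋂ n, s n ∉ D := by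
    by_contra! h
    exact hD (.of_iInter_nat_mem h)
  refine ⟨fun i => if h : ∃ n, i ∉ s n then Nat.find h else 0, tendsto_atTop.2 fun n => ?_⟩
  have hlt : ∀ᶠ i in D, ∀ k ∈ Iio n, i ∈ s k :=
    (eventually_all_finite (finite_Iio n)).2 fun k _ => hs k
  filter_upwards [Ultrafilter.compl_mem_iff_notMem.2 hsD, hlt] with i hi hlt
  have hex : ∃ k, i ∉ s k := by simpa using hi
  rw [dif_pos hex, Nat.le_find_iff]
  exact fun k hk => not_not.2 (hlt k hk)

theorem Set.Countable.isClosed_of_countableInterFilter_nhds {α : Type*} [TopologicalSpace α]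
    [T1Space α] [∀ x : α, CountableInterFilter (𝓝 x)] {s : Set α} (hs : s.Countable) :
    IsClosed s := by
  refine isOpen_compl_iff.1 (isOpen_iff_mem_nhds.2 fun x hx => ?_)
  refine mem_of_superset ((countable_bInter_mem hs).2 fun y hy =>
    compl_singleton_mem_nhds (ne_of_mem_of_not_mem hy hx).symm) fun z hz hzs => ?_
  exact mem_iInter₂.1 hz z hzs rfl

theorem IsCompact.finite_of_countableInterFilter_nhds {α : Type*} [TopologicalSpace α]
    [T1Space α] [∀ x : α, CountableInterFilter (𝓝 x)] {K : Set α} (hK : IsCompact K) :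
    K.Finite := by
  by_contra hinf
  obtain ⟨S, hSK, hSc, hSinf⟩ := Set.Infinite.exists_subset_countable_infinite hinf
  refine hSinf ((hK.of_isClosed_subset hSc.isClosed_of_countableInterFilter_nhds hSK).finite ?_)
  exact isDiscrete_iff_forall_mem_exists_isClosed.2 fun s hs =>
    ⟨s, (hSc.mono hs).isClosed_of_countableInterFilter_nhds, inter_eq_left.2 hs⟩

theorem exists_cover_without_finite_subcover {α : Type*} [TopologicalSpace α] {s : Set α}
    (hs : ¬IsCompact s) : ∃ c : α → Set α, (∀ x, IsOpen (c x)) ∧ (∀ x ∈ s, x ∈ c x) ∧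
      ∀ t : Finset α, ¬s ⊆ ⋃ x ∈ t, c x := by
  classical
  by_contra! H
  refine hs (isCompact_of_finite_subcover fun U hU hsU => ?_)
  choose j hj using fun x : s => mem_iUnion.1 (hsU x.2)
  obtain ⟨t, ht⟩ := H (fun x => if hx : x ∈ s then U (j ⟨x, hx⟩) else ∅)
    (fun x => by split_ifs <;> simp [hU]) (fun x hx => by simp [hx, hj])
  refine ⟨(t.subtype (· ∈ s)).image j, fun x hx => ?_⟩
  obtain ⟨y, hyt, hy⟩ := mem_iUnion₂.1 (ht hx)
  split_ifs at hy with hys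
  · exact mem_iUnion₂.2
      ⟨j ⟨y, hys⟩, Finset.mem_image_of_mem _ (Finset.mem_subtype.2 hyt), hy⟩
  · exact absurd hy (notMem_empty x)

attribute [local instance] uTop

namespace Uprod

variable {I : Type u} {D : Ultrafilter I} {X : I → Type v}

abbrev mk (x : ∀ i, X i) : Uprod D X := Quotient.mk (USetoid D X) x

noncomputable def out (q : Uprod D X) : ∀ i, X i := Quotient.out q

theorem mk_out (q : Uprod D X) : mk (out q) = q := Quotient.out_eq q

theorem mk_surjective : Function.Surjective (mk : (∀ i, X i) → Uprod D X) :=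
  fun q => ⟨out q, mk_out q⟩

theorem mk_eq_mk {x y : ∀ i, X i} : (mk x : Uprod D X) = mk y ↔ ∀ᶠ i in D, x i = y i :=
  ⟨Quotient.exact, fun h => Quotient.sound h⟩

theorem mk_mem_ultrabox {U : ∀ i, Set (X i)} {x : ∀ i, X i} :
    mk x ∈ ultrabox D X U ↔ ∀ᶠ i in D, x i ∈ U i := by
  refine ⟨fun ⟨y, hyx, hyU⟩ => ?_, fun hx => ⟨x, rfl, hx⟩⟩
  filter_upwards [mk_eq_mk.1 hyx, hyU] with i hi hyi
  rwa [← hi]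

theorem mem_ultrabox_iff_out {U : ∀ i, Set (X i)} {q : Uprod D X} :
    q ∈ ultrabox D X U ↔ ∀ᶠ i in D, out q i ∈ U i := by
  rw [← mk_mem_ultrabox, mk_out]

theorem ultrabox_subset_ultrabox {U V : ∀ i, Set (X i)} (h : ∀ᶠ i in D, U i ⊆ V i) :
    ultrabox D X U ⊆ ultrabox D X V := by
  intro q hq
  obtain ⟨x, rfl⟩ := mk_surjective q
  exact mk_mem_ultrabox.2 (((mk_mem_ultrabox.1 hq).and h).mono fun i hi => hi.2 hi.1)

theorem ultrabox_inter (U V : ∀ i, Set (X i)) :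
    ultrabox D X U ∩ ultrabox D X V = ultrabox D X fun i => U i ∩ V i := by
  ext q
  obtain ⟨x, rfl⟩ := mk_surjective q
  simp only [mem_inter_iff, mk_mem_ultrabox, eventually_and]

theorem ultrabox_univ : ultrabox D X (fun _ => univ) = univ :=
  eq_univ_of_forall fun q => by
    obtain ⟨x, rfl⟩ := mk_surjective q
    exact mk_mem_ultrabox.2 (Eventually.of_forall fun _ => mem_univ _)

theorem ultrabox_compl (U : ∀ i, Set (X i)) :
    (ultrabox D X U)ᶜ = ultrabox D X fun i => (U i)ᶜ := by
  ext q
  obtain ⟨x, rfl⟩ := mk_surjective q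
  simp only [mem_compl_iff, mk_mem_ultrabox, Ultrafilter.eventually_not]

variable [∀ i, TopologicalSpace (X i)]

theorem isTopologicalBasis_ultrabox :
    TopologicalSpace.IsTopologicalBasis
      {s : Set (Uprod D X) |
        ∃ U : ∀ i, Set (X i), (∀ i, IsOpen (U i)) ∧ s = ultrabox D X U} where
  exists_subset_inter := by
    rintro _ ⟨U, hU, rfl⟩ _ ⟨V, hV, rfl⟩ q hq
    rw [ultrabox_inter] at hq ⊢
    exact ⟨_, ⟨_, fun i => (hU i).inter (hV i), rfl⟩, hq, subset_rfl⟩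
  sUnion_eq := sUnion_eq_univ_iff.2 fun q =>
    ⟨_, ⟨_, fun _ => isOpen_univ, rfl⟩, ultrabox_univ ▸ mem_univ q⟩
  eq_generateFrom := rfl

theorem isOpen_ultrabox {U : ∀ i, Set (X i)} (hU : ∀ i, IsOpen (U i)) :
    IsOpen (ultrabox D X U) :=
  isTopologicalBasis_ultrabox.isOpen ⟨U, hU, rfl⟩

theorem isClosed_ultrabox {U : ∀ i, Set (X i)} (hU : ∀ i, IsClosed (U i)) :
    IsClosed (ultrabox D X U) := by
  rw [← isOpen_compl_iff, ultrabox_compl]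
  exact isOpen_ultrabox fun i => (hU i).isOpen_compl

theorem mem_nhds_iff_exists_ultrabox {q : Uprod D X} {s : Set (Uprod D X)} :
    s ∈ 𝓝 q ↔ ∃ U : ∀ i, Set (X i), (∀ i, IsOpen (U i)) ∧ q ∈ ultrabox D X U ∧
      ultrabox D X U ⊆ s := by
  rw [isTopologicalBasis_ultrabox.mem_nhds_iff]
  constructor
  · rintro ⟨_, ⟨U, hU, rfl⟩, hq, hs⟩
    exact ⟨U, hU, hq, hs⟩
  · rintro ⟨U, hU, hq, hs⟩
    exact ⟨_, ⟨U, hU, rfl⟩, hq, hs⟩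

theorem t2Space (h : ∀ᶠ i in D, T2Space (X i)) : T2Space (Uprod D X) := by
  refine ⟨fun p q hpq => ?_⟩
  obtain ⟨x, rfl⟩ := mk_surjective p
  obtain ⟨y, rfl⟩ := mk_surjective q
  have hne : ∀ᶠ i in D, x i ≠ y i := Ultrafilter.eventually_not.2 (mt mk_eq_mk.2 hpq)
  have hsep : ∀ i, ∃ U V : Set (X i), IsOpen U ∧ IsOpen V ∧
      (T2Space (X i) ∧ x i ≠ y i → x i ∈ U ∧ y i ∈ V ∧ Disjoint U V) := fun i => by
    by_cases hi : T2Space (X i) ∧ x i ≠ y i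
    · obtain ⟨U, V, hU, hV, hxU, hyV, hUV⟩ := @t2_separation _ _ hi.1 _ _ hi.2
      exact ⟨U, V, hU, hV, fun _ => ⟨hxU, hyV, hUV⟩⟩
    · exact ⟨∅, ∅, isOpen_empty, isOpen_empty, fun h' => absurd h' hi⟩
  choose U V hU hV hUV using hsep
  have hUV' : ∀ᶠ i in D, x i ∈ U i ∧ y i ∈ V i ∧ Disjoint (U i) (V i) :=
    (h.and hne).mono hUV
  refine ⟨_, _, isOpen_ultrabox hU, isOpen_ultrabox hV,
    mk_mem_ultrabox.2 (hUV'.mono fun i hi => hi.1),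
    mk_mem_ultrabox.2 (hUV'.mono fun i hi => hi.2.1), Set.disjoint_left.2 fun z hzU hzV => ?_⟩
  obtain ⟨z, rfl⟩ := mk_surjective z
  obtain ⟨i, hi, hzUi, hzVi⟩ :=
    (hUV'.and ((mk_mem_ultrabox.1 hzU).and (mk_mem_ultrabox.1 hzV))).exists
  exact hi.2.2.ne_of_mem hzUi hzVi rfl

theorem eventually_isCompact_of_isCompact_ultrabox (x₀ : ∀ i, X i) {Y : ∀ i, Set (X i)}
    (hY : IsCompact (ultrabox D X Y)) : ∀ᶠ i in D, IsCompact (Y i) := by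
  classical
  by_contra hne
  have hE : ∀ᶠ i in D, ¬IsCompact (Y i) := Ultrafilter.eventually_not.2 hne
  have hcover : ∀ i, ∃ c : X i → Set (X i), (∀ x, IsOpen (c x)) ∧ (∀ x ∈ Y i, x ∈ c x) ∧
      (¬IsCompact (Y i) → ∀ t : Finset (X i), ¬Y i ⊆ ⋃ x ∈ t, c x) := fun i => by
    by_cases hi : IsCompact (Y i)
    · exact ⟨fun _ => univ, fun _ => isOpen_univ, fun x _ => mem_univ x, absurd hi⟩
    · obtain ⟨c, hc, hmem, hfin⟩ := exists_cover_without_finite_subcover hi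
      exact ⟨c, hc, hmem, fun _ => hfin⟩
  choose c hc hmem hfin using hcover
  obtain ⟨t, -, ht⟩ := hY.elim_nhds_subcover
    (fun z => ultrabox D X fun i => c i (out z i)) fun z hz =>
      (isOpen_ultrabox fun i => hc i _).mem_nhds <| mem_ultrabox_iff_out.2 <|
        (mem_ultrabox_iff_out.1 hz).mono fun i hi => hmem i _ hi
  have hescape : ∀ i, ∃ y : X i, ¬IsCompact (Y i) →
      y ∈ Y i ∧ ∀ z ∈ t, y ∉ c i (out z i) := fun i => by
    by_cases hi : IsCompact (Y i)
    · exact ⟨x₀ i, absurd hi⟩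
    · obtain ⟨y, hyY, hy⟩ := not_subset.1 (hfin i hi (t.image fun z : Uprod D X => out z i))
      exact ⟨y, fun _ => ⟨hyY, fun z hz hyz =>
        hy (mem_iUnion₂.2 ⟨_, Finset.mem_image_of_mem _ hz, hyz⟩)⟩⟩
  choose y hy using hescape
  have hyY : mk y ∈ ultrabox D X Y := mk_mem_ultrabox.2 (hE.mono fun i hi => (hy i hi).1)
  obtain ⟨z, hzt, hyz⟩ := mem_iUnion₂.1 (ht hyY)
  obtain ⟨i, hi, hyi⟩ := (hE.and (mk_mem_ultrabox.1 hyz)).exists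
  exact (hy i hi).2 z hzt hyi

theorem ultrabox_closure_range_subset [CountableInterFilter (D : Filter I)]
    (a : ℕ → ∀ i, X i) :
    ultrabox D X (fun i => closure (range fun n => a n i)) ⊆
      closure (range fun n => mk (a n)) := by
  intro q hq
  obtain ⟨b, rfl⟩ := mk_surjective q
  have hb := mk_mem_ultrabox.1 hq
  rw [isTopologicalBasis_ultrabox.mem_closure_iff]
  rintro _ ⟨V, hV, rfl⟩ hbV
  have hmeet : ∀ᶠ i in D, ∃ n, a n i ∈ V i := (hb.and (mk_mem_ultrabox.1 hbV)).mono
    fun i ⟨hcl, hbi⟩ => by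
      obtain ⟨_, hx, n, rfl⟩ := mem_closure_iff.1 hcl (V i) (hV i) hbi
      exact ⟨n, hx⟩
  obtain ⟨n, hn⟩ := Ultrafilter.exists_eventually_of_eventually_exists hmeet
  exact ⟨mk (a n), mk_mem_ultrabox.2 hn, n, rfl⟩

theorem finite_of_isCompact_of_countableInterFilter [CountableInterFilter (D : Filter I)]
    [T2Space (Uprod D X)] (h : ∀ᶠ i in D, ∀ K : Set (X i), IsCompact K → K.Finite)
    {K : Set (Uprod D X)} (hK : IsCompact K) : K.Finite := by
  by_contra hinf
  let e := Set.Infinite.natEmbedding K hinf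
  let a : ℕ → ∀ i, X i := fun n => out (e n : Uprod D X)
  have ha : ∀ n, mk (a n) = (e n : Uprod D X) := fun n => mk_out _
  have hinj : ∀ᶠ i in D, Function.Injective fun n => a n i := by
    refine eventually_countable_forall.2 fun n => eventually_countable_forall.2 fun m => ?_
    by_cases hnm : n = m
    · exact Eventually.of_forall fun _ _ => hnm
    · have hne : ¬∀ᶠ i in D, a n i = a m i := fun h' =>
        hnm (e.injective (Subtype.ext (by rw [← ha, ← ha, mk_eq_mk.2 h'])))
      exact (Ultrafilter.eventually_not.2 hne).mono fun i hi h' => absurd h' hi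
  have hsub : ultrabox D X (fun i => closure (range fun n => a n i)) ⊆ K :=
    (ultrabox_closure_range_subset a).trans <| closure_minimal
      (range_subset_iff.2 fun n => (ha n).symm ▸ (e n).2) hK.isClosed
  have hcpt := eventually_isCompact_of_isCompact_ultrabox (a 0)
    (hK.of_isClosed_subset (isClosed_ultrabox fun _ => isClosed_closure) hsub)
  obtain ⟨i, hfin, hcpt, hinj⟩ := (h.and (hcpt.and hinj)).exists
  exact infinite_range_of_injective hinj ((hfin _ hcpt).subset subset_closure)

theorem countableInterFilter_nhds (hD : ¬CountableInterFilter (D : Filter I)) (q : Uprod D X) :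
    CountableInterFilter (𝓝 q) := by
  obtain ⟨ρ, hρ⟩ := Ultrafilter.exists_tendsto_atTop_of_not_countableInterFilter hD
  obtain ⟨b, rfl⟩ := mk_surjective q
  refine .of_iInter_nat_mem fun s hs => ?_
  choose U hU hbU hUs using fun n => mem_nhds_iff_exists_ultrabox.1 (hs n)
  refine mem_nhds_iff_exists_ultrabox.2
    ⟨fun i => ⋂ k ∈ {k | k < ρ i ∧ b i ∈ U k i}, U k i,
      fun i => ((finite_lt_nat (ρ i)).subset fun _ hk => hk.1).isOpen_biInter fun k _ => hU k i,
      mk_mem_ultrabox.2 (Eventually.of_forall fun i => mem_iInter₂.2 fun _ hk => hk.2),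
      subset_iInter fun n => (ultrabox_subset_ultrabox ?_).trans (hUs n)⟩
  filter_upwards [hρ.eventually_gt_atTop n, mk_mem_ultrabox.1 (hbU n)] with i hn hb
  exact biInter_subset_of_mem (t := fun k => U k i) ⟨hn, hb⟩

end Uprod

/-- Topological ultraproducts of pseudofinite Hausdorff spaces are pseudofinite
Hausdorff: if D-almost every `X i` is Hausdorff with no infinite compact
subsets, then `∏_D X i` is Hausdorff with no infinite compact subsets. -/
theorem ultraproduct_pseudofinite_hausdorff {I : Type u} (D : Ultrafilter I)
    (X : I → Type u) [∀ i, TopologicalSpace (X i)]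
    (h : {i | T2Space (X i) ∧ ∀ K : Set (X i), IsCompact K → K.Finite} ∈ D) :
    letI := uTop D X
    T2Space (Uprod D X) ∧ ∀ K : Set (Uprod D X), IsCompact K → K.Finite := by
  have : T2Space (Uprod D X) := Uprod.t2Space (Eventually.mono h fun _ hi => hi.1)
  refine ⟨this, fun K hK => ?_⟩
  by_cases hD : CountableInterFilter (D : Filter I)
  · exact Uprod.finite_of_isCompact_of_countableInterFilter (Eventually.mono h fun _ hi => hi.2) hK
  · have := Uprod.countableInterFilter_nhds (X := X) hD
    exact hK.finite_of_countableInterFilter_nhds
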